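/- With the notation of the Cantor basis setup: every element of W_{2^{l-1}} satisfies x^{2^{2^{l-1}}} = x; that is, W_{2^{l-1}} ⊆ GF(2^{2^{l-1}}) inside GF(2^{2^L}) for 1 ≤ 2^{l-1} ≤ 2^L. -/

import Mathlib

/-!
Let `℘ x = x ^ 2 - x`, which is additive in characteristic two. The Frobenius map is `id + ℘`,
and composing `x ^ 2 ^ 2 ^ k = x + ℘^[2 ^ k] x` with itself (the cross term `2 ℘^[2 ^ k] x`
vanishes) gives the same identity for `k + 1`; so the fixed points of `x ↦ x ^ 2 ^ 2 ^ k` form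
the kernel of `℘^[2 ^ k]`. The Cantor relations say `℘ β_{i+1} = β_i` and `℘ β_1 = ℘ 1 = 0`,
so `℘^[j] β_j = 0`; hence `℘^[2 ^ k]` kills `β_1, …, β_{2^k}` and therefore their span.
-/

open Function

theorem AddMonoidHom.iterate_eq_zero_of_mem_span {n : ℕ} {M : Type*} [AddCommGroup M]
    [Module (ZMod n) M] (f : M →+ M) (m : ℕ) {s : Set M} (hs : ∀ x ∈ s, f^[m] x = 0) {x : M}
    (hx : x ∈ Submodule.span (ZMod n) s) : f^[m] x = 0 := by
  have hcoe : ⇑(f.toZModLinearMap n ^ m) = f^[m] := by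
    rw [Module.End.coe_pow, coe_toZModLinearMap]
  rw [← hcoe, ← LinearMap.mem_ker]
  refine Submodule.span_le.2 (fun y hy ↦ ?_) hx
  rw [SetLike.mem_coe, LinearMap.mem_ker, hcoe]
  exact hs y hy

section ArtinSchreier

variable (R : Type*) [CommRing R] [CharP R 2]

def artinSchreier : R →+ R where
  toFun x := x ^ 2 - x
  map_zero' := by simp
  map_add' x y := by rw [CharTwo.add_sq]; ring

variable {R}

theorem artinSchreier_apply (x : R) : artinSchreier R x = x ^ 2 - x := rfl

theorem pow_two_pow_two_pow_eq_add_iterate_artinSchreier (k : ℕ) (x : R) :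
    x ^ 2 ^ 2 ^ k = x + (artinSchreier R)^[2 ^ k] x := by
  induction k generalizing x with
  | zero => simp [artinSchreier_apply]
  | succ k ih =>
    set ψ := (artinSchreier R)^[2 ^ k]
    have hψ : ∀ y z, ψ (y + z) = ψ y + ψ z := iterate_map_add _ _
    calc x ^ 2 ^ 2 ^ (k + 1) = (x ^ 2 ^ 2 ^ k) ^ 2 ^ 2 ^ k := by
          rw [← pow_mul, ← pow_add, pow_succ, mul_two]
      _ = x + ψ x + ψ (x + ψ x) := by rw [ih, ih]
      _ = x + ψ (ψ x) := by
          rw [hψ, add_assoc, ← add_assoc (ψ x), CharTwo.add_self_eq_zero, zero_add]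
      _ = x + (artinSchreier R)^[2 ^ (k + 1)] x := by
          rw [pow_succ, mul_two, iterate_add_apply]

theorem pow_two_pow_two_pow_eq_self_iff (k : ℕ) (x : R) :
    x ^ 2 ^ 2 ^ k = x ↔ (artinSchreier R)^[2 ^ k] x = 0 := by
  rw [pow_two_pow_two_pow_eq_add_iterate_artinSchreier, add_eq_left]

theorem iterate_artinSchreier_eq_zero_of_sq_sub_self {n : ℕ} (β : Fin n → R) (hn : 0 < n)
    (h₀ : β ⟨0, hn⟩ = 1)
    (hβ : ∀ i : ℕ, ∀ h : i + 1 < n, β ⟨i + 1, h⟩ ^ 2 - β ⟨i + 1, h⟩ = β ⟨i, by omega⟩)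
    (j : Fin n) {m : ℕ} (hm : (j : ℕ) < m) :
    (artinSchreier R)^[m] (β j) = 0 := by
  have hβj : ∀ (i : ℕ) (hi : i < n), (artinSchreier R)^[i + 1] (β ⟨i, hi⟩) = 0 := by
    intro i
    induction i with
    | zero => intro _; simp [artinSchreier_apply, h₀]
    | succ i ih =>
      intro hi
      rw [iterate_succ_apply, artinSchreier_apply, hβ i hi, ih]
  obtain ⟨d, rfl⟩ := Nat.exists_eq_add_of_lt hm
  rw [show (j : ℕ) + d + 1 = d + (j + 1) by omega, iterate_add_apply]
  exact (congrArg _ (hβj j j.isLt)).trans (iterate_map_zero _ d)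

end ArtinSchreier

/-- For a Cantor basis of `GF(2^(2^L))`, every element of the subspace
`W_{2^(l-1)}` spanned by the first `2^(l-1)` basis vectors satisfies
`x^(2^(2^(l-1))) = x`, i.e. `W_{2^(l-1)}` is contained in the subfield
`GF(2^(2^(l-1)))` of `GF(2^(2^L))`. -/
theorem cantor_span_subfield (L l : ℕ)
    (b : Module.Basis (Fin (2 ^ L)) (ZMod 2) (GaloisField 2 (2 ^ L)))
    (hb1 : b ⟨0, by positivity⟩ = 1)
    (hb : ∀ i : ℕ, ∀ h : i + 1 < 2 ^ L,
      (b ⟨i + 1, h⟩) ^ 2 - b ⟨i + 1, h⟩ = b ⟨i, by omega⟩) :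
    ∀ x ∈ Submodule.span (ZMod 2)
        (b '' {j : Fin (2 ^ L) | (j : ℕ) < 2 ^ (l - 1)}),
      x ^ (2 ^ (2 ^ (l - 1))) = x := by
  intro x hx
  rw [pow_two_pow_two_pow_eq_self_iff]
  refine (artinSchreier _).iterate_eq_zero_of_mem_span _ ?_ hx
  rintro _ ⟨j, hj, rfl⟩
  exact iterate_artinSchreier_eq_zero_of_sq_sub_self b _ hb1 hb j hj
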